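/- Let (Y,d) be a metric space with an action of a finitely generated group Γ with finite symmetric generating set S containing the identity. For y,y' ∈ Y and n ∈ N, let δ_n(y,y') be the minimum over sequences y₀ = y, y₁, …, y_{2n+1} = y' with y_{2i} = s·y_{2i−1} for some s ∈ S (for 1 ≤ i ≤ n) of ∑_{i=0}^{n} d(y_{2i}, y_{2i+1}). Then the warped metric d_s on (Y, s·d) satisfies d_s(y,y') = min over n ∈ N of (n + s·δ_n(y,y')), and consequently the function s ↦ d_s(y,y') is concave on [1,∞). -/

import Mathlib

open scoped BigOperators

noncomputable def wordLength {G : Type*} [Group G] (S : Set G) (g : G) : ℕ :=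
  sInf {n : ℕ | ∃ f : Fin n → G, (∀ i, f i ∈ S ∨ (f i)⁻¹ ∈ S) ∧ (List.ofFn f).prod = g}

def chainSums {G : Type*} [Group G] {X : Type*} (S : Set G) (act : G → X → X)
    (d : X → X → ℝ) (x x' : X) : Set ℝ :=
  {c | ∃ (N : ℕ) (xs : Fin (N + 1) → X) (γs : Fin N → G),
    xs 0 = x ∧ xs (Fin.last N) = x' ∧
    c = ∑ i : Fin N, ((wordLength S (γs i) : ℝ) + d (act (γs i) (xs i.castSucc)) (xs i.succ))}

noncomputable def warpDist {G : Type*} [Group G] {X : Type*} (S : Set G) (act : G → X → X)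
    (d : X → X → ℝ) (x x' : X) : ℝ :=
  sInf (chainSums S act d x x')

/-- `δ_n(y,y')`: the minimal cost `∑_{i=0}^n d(y_{2i}, y_{2i+1})` over sequences
`y₀ = y, …, y_{2n+1} = y'` with `y_{2i} = s·y_{2i-1}` for some `s ∈ S`
(the sequence is encoded as `n+1` consecutive pairs `(y_{2i}, y_{2i+1})`). -/
noncomputable def deltaCost {G : Type*} [Group G] {Y : Type*} [MetricSpace Y]
    (S : Set G) (act : G → Y → Y) (n : ℕ) (y y' : Y) : ℝ :=
  sInf {c | ∃ ys : Fin (n + 1) → Y × Y,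
    (ys 0).1 = y ∧ (ys (Fin.last n)).2 = y' ∧
    (∀ i : Fin n, ∃ s ∈ S, (ys i.succ).1 = act s ((ys i.castSucc).2)) ∧
    c = ∑ i : Fin (n + 1), dist (ys i).1 (ys i).2}

/-!
A warped chain alternates group moves `γᵢ`, costing the word length `|γᵢ|_S`, with jumps
costing `s·d`. Spelling each `γᵢ` as a geodesic word in `S` and absorbing consecutive jumps
into one by the triangle inequality turns it into a `δₙ`-chain with `n ≤ ∑ |γᵢ|_S` and no
larger `d`-cost; conversely a `δₙ`-chain is a warped chain through `n` elements of `S`.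
Hence `d_s = ⨅ n, (n + s·δₙ)`, an infimum of affine functions of `s`, which is concave.
-/

theorem concaveOn_ciInf {ι E : Type*} [Nonempty ι] [AddCommMonoid E] [Module ℝ E] {s : Set E}
    {f : ι → E → ℝ} (hf : ∀ i, ConcaveOn ℝ s (f i))
    (hbdd : ∀ x ∈ s, BddBelow (Set.range fun i => f i x)) :
    ConcaveOn ℝ s fun x => ⨅ i, f i x := by
  refine ⟨(hf (Classical.arbitrary ι)).1, fun x hx z hz a b ha hb hab => le_ciInf fun i => ?_⟩
  dsimp only
  calc a • (⨅ i, f i x) + b • ⨅ i, f i z ≤ a • f i x + b • f i z := by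
        gcongr
        · exact ciInf_le (hbdd x hx) i
        · exact ciInf_le (hbdd z hz) i
    _ ≤ f i (a • x + b • z) := (hf i).2 hx hz ha hb hab

section WordLength

variable {G : Type*} [Group G] {S : Set G}

theorem wordLength_one (S : Set G) : wordLength S 1 = 0 :=
  Nat.sInf_eq_zero.mpr (Or.inl ⟨Fin.elim0, fun i => i.elim0, by simp⟩)

theorem wordLength_le_one_of_mem {s : G} (hs : s ∈ S) : wordLength S s ≤ 1 :=
  Nat.sInf_le ⟨fun _ => s, fun _ => Or.inl hs, by simp⟩

theorem exists_geodesic_word (hSsymm : ∀ s ∈ S, s⁻¹ ∈ S) (hSgen : Subgroup.closure S = ⊤)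
    (g : G) :
    ∃ l : List G, (∀ a ∈ l, a ∈ S) ∧ l.prod = g ∧ l.length = wordLength S g := by
  have hg : g ∈ Submonoid.closure S := by
    have hinv : S⁻¹ ⊆ S := fun x hx => by simpa using hSsymm _ hx
    rw [← Set.union_eq_left.mpr hinv, ← Subgroup.closure_toSubmonoid, hSgen]
    trivial
  obtain ⟨l, hlS, hl⟩ := Submonoid.exists_list_of_mem_closure hg
  obtain ⟨f, hf, hfg⟩ := Nat.sInf_mem (s := {n : ℕ | ∃ f : Fin n → G,
      (∀ i, f i ∈ S ∨ (f i)⁻¹ ∈ S) ∧ (List.ofFn f).prod = g})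
    ⟨l.length, l.get, fun i => Or.inl (hlS _ (l.get_mem i)), by rwa [List.ofFn_get]⟩
  refine ⟨List.ofFn f, fun a ha => ?_, hfg, List.length_ofFn⟩
  obtain ⟨i, rfl⟩ := List.mem_ofFn.mp ha
  exact (hf i).elim id fun h => by simpa using hSsymm _ h

end WordLength

section DeltaChains

variable {G : Type*} {Y : Type*} [MetricSpace Y] {S : Set G} {act : G → Y → Y}
  {n : ℕ} {y y' z : Y} {c : ℝ}

/-- `deltaCost S act n y y'` is, by definition, `sInf {c | IsDeltaChainCost S act n y y' c}`. -/
def IsDeltaChainCost (S : Set G) (act : G → Y → Y) (n : ℕ) (y y' : Y) (c : ℝ) : Prop :=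
  ∃ ys : Fin (n + 1) → Y × Y,
    (ys 0).1 = y ∧ (ys (Fin.last n)).2 = y' ∧
    (∀ i : Fin n, ∃ s ∈ S, (ys i.succ).1 = act s ((ys i.castSucc).2)) ∧
    c = ∑ i : Fin (n + 1), dist (ys i).1 (ys i).2

theorem IsDeltaChainCost.nonneg (h : IsDeltaChainCost S act n y y' c) : 0 ≤ c := by
  obtain ⟨ys, -, -, -, rfl⟩ := h
  exact Finset.sum_nonneg fun i _ => dist_nonneg

theorem isDeltaChainCost_zero (S : Set G) (act : G → Y → Y) (y : Y) :
    IsDeltaChainCost S act 0 y y 0 :=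
  ⟨fun _ => (y, y), rfl, rfl, fun i => i.elim0, by simp⟩

theorem exists_isDeltaChainCost [Group G] (hS1 : (1 : G) ∈ S) (hact1 : ∀ y, act 1 y = y)
    (n : ℕ) (y y' : Y) : ∃ c, IsDeltaChainCost S act n y y' c := by
  refine ⟨_, fun i => if i = 0 then (y, y') else (y', y'), by simp, ?_,
    fun i => ⟨1, hS1, ?_⟩, rfl⟩
  · dsimp only
    split_ifs <;> rfl
  · simp only [Fin.succ_ne_zero, ↓reduceIte, hact1]
    split_ifs <;> rfl

theorem deltaCost_nonneg [Group G] (S : Set G) (act : G → Y → Y) (n : ℕ) (y y' : Y) :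
    0 ≤ deltaCost S act n y y' :=
  Real.sInf_nonneg fun _ hc => IsDeltaChainCost.nonneg hc

theorem deltaCost_le [Group G] (h : IsDeltaChainCost S act n y y' c) :
    deltaCost S act n y y' ≤ c :=
  csInf_le ⟨0, fun _ hc => IsDeltaChainCost.nonneg hc⟩ h


theorem IsDeltaChainCost.snoc {s : G} (hs : s ∈ S) (h : IsDeltaChainCost S act n y z c) :
    IsDeltaChainCost S act (n + 1) y (act s z) c := by
  obtain ⟨ys, h0, hl, hstep, rfl⟩ := h
  refine ⟨Fin.snoc ys (act s z, act s z), ?_, by rw [Fin.snoc_last], fun i => ?_, ?_⟩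
  · rw [← Fin.castSucc_zero, Fin.snoc_castSucc, h0]
  · induction i using Fin.lastCases with
    | last => exact ⟨s, hs, by rw [Fin.succ_last, Fin.snoc_last, Fin.snoc_castSucc, hl]⟩
    | cast j =>
      obtain ⟨t, ht, hjt⟩ := hstep j
      exact ⟨t, ht, by rw [Fin.succ_castSucc, Fin.snoc_castSucc, Fin.snoc_castSucc, hjt]⟩
  · simp [Fin.sum_univ_castSucc]

theorem IsDeltaChainCost.act_list_prod [Monoid G] (hact1 : ∀ y, act 1 y = y)
    (hactmul : ∀ g h y, act (g * h) y = act g (act h y)) (h : IsDeltaChainCost S act n y z c)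
    (l : List G) (hl : ∀ a ∈ l, a ∈ S) :
    IsDeltaChainCost S act (n + l.length) y (act l.prod z) c := by
  induction l with
  | nil => simpa [hact1] using h
  | cons a t ih =>
    rw [List.prod_cons, hactmul, List.length_cons, ← add_assoc]
    exact (ih fun b hb => hl b (List.mem_cons_of_mem a hb)).snoc (hl a List.mem_cons_self)

theorem IsDeltaChainCost.retarget (h : IsDeltaChainCost S act n y z c) (w : Y) :
    ∃ c' ≤ c + dist z w, IsDeltaChainCost S act n y w c' := by
  obtain ⟨ys, h0, hl, hstep, rfl⟩ := h
  set ys' := Function.update ys (Fin.last n) ((ys (Fin.last n)).1, w)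
  have hfst : ∀ i, (ys' i).1 = (ys i).1 := by
    intro i
    rcases eq_or_ne i (Fin.last n) with rfl | hi
    · simp [ys']
    · simp [ys', hi]
  have hinit : ∀ i : Fin n, ys' i.castSucc = ys i.castSucc :=
    fun i => Function.update_of_ne (Fin.castSucc_lt_last i).ne _ _
  refine ⟨_, ?_, ys', by rw [hfst, h0], by simp [ys'], fun i => ?_, rfl⟩
  · have hlast : dist (ys (Fin.last n)).1 w ≤
        dist (ys (Fin.last n)).1 (ys (Fin.last n)).2 + dist z w :=
      hl ▸ dist_triangle _ _ _
    simp only [Fin.sum_univ_castSucc, hinit]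
    simp only [ys', Function.update_self]
    linarith
  · obtain ⟨s, hs, hi⟩ := hstep i
    exact ⟨s, hs, by rw [hfst, hinit, hi]⟩

theorem IsDeltaChainCost.warpStep [Group G] (hSsymm : ∀ s ∈ S, s⁻¹ ∈ S)
    (hSgen : Subgroup.closure S = ⊤) (hact1 : ∀ y, act 1 y = y)
    (hactmul : ∀ g h y, act (g * h) y = act g (act h y)) (h : IsDeltaChainCost S act n y z c)
    (γ : G) (w : Y) :
    ∃ c' ≤ c + dist (act γ z) w, IsDeltaChainCost S act (n + wordLength S γ) y w c' := by
  obtain ⟨l, hlS, rfl, hlen⟩ := exists_geodesic_word hSsymm hSgen γ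
  rw [← hlen]
  exact (h.act_list_prod hact1 hactmul l hlS).retarget w

end DeltaChains

section WarpedChains

variable {G : Type*} [Group G] {Y : Type*} [MetricSpace Y] {S : Set G} {act : G → Y → Y}

theorem chainSums_nonempty {X : Type*} (S : Set G) (act : G → X → X) (d : X → X → ℝ)
    (x x' : X) : (chainSums S act d x x').Nonempty :=
  ⟨_, 1, fun i => if i = 0 then x else x', fun _ => 1, rfl, if_neg (by decide), rfl⟩

theorem chainSums_bddBelow {X : Type*} (S : Set G) (act : G → X → X) {d : X → X → ℝ}
    (hd : ∀ a b, 0 ≤ d a b) (x x' : X) : BddBelow (chainSums S act d x x') :=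
  ⟨0, by
    rintro _ ⟨N, xs, γs, -, -, rfl⟩
    exact Finset.sum_nonneg fun i _ => add_nonneg (Nat.cast_nonneg _) (hd _ _)⟩

theorem bddBelow_range_add_mul_deltaCost {s : ℝ} (hs : 0 ≤ s) (y y' : Y) :
    BddBelow (Set.range fun n : ℕ => n + s * deltaCost S act n y y') :=
  ⟨0, by rintro _ ⟨n, rfl⟩; have := deltaCost_nonneg S act n y y'; positivity⟩

theorem exists_isDeltaChainCost_le_of_chain (hSsymm : ∀ s ∈ S, s⁻¹ ∈ S)
    (hSgen : Subgroup.closure S = ⊤) (hact1 : ∀ y, act 1 y = y)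
    (hactmul : ∀ g h y, act (g * h) y = act g (act h y)) {N : ℕ} (xs : Fin (N + 1) → Y)
    (γs : Fin N → G) :
    ∃ n c, IsDeltaChainCost S act n (xs 0) (xs (Fin.last N)) c ∧
      n ≤ ∑ i, wordLength S (γs i) ∧
      c ≤ ∑ i, dist (act (γs i) (xs i.castSucc)) (xs i.succ) := by
  induction N with
  | zero => exact ⟨0, 0, isDeltaChainCost_zero S act (xs 0), by simp, by simp⟩
  | succ N ih =>
    obtain ⟨n, c, h, hn, hc⟩ := ih (fun i => xs i.castSucc) (fun i => γs i.castSucc)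
    obtain ⟨c', hc', h'⟩ :=
      h.warpStep hSsymm hSgen hact1 hactmul (γs (Fin.last N)) (xs (Fin.last (N + 1)))
    refine ⟨_, c', by rwa [Fin.castSucc_zero] at h', ?_, ?_⟩
    · rw [Fin.sum_univ_castSucc]
      omega
    · simp only [Fin.sum_univ_castSucc, Fin.succ_last, Fin.succ_castSucc]
      linarith

theorem exists_mem_chainSums_le_of_isDeltaChainCost (hact1 : ∀ y, act 1 y = y) (s : ℝ)
    {n : ℕ} {y y' : Y} {c : ℝ}
    (h : IsDeltaChainCost S act n y y' c) :
    ∃ a ∈ chainSums S act (fun a b => s * dist a b) y y', a ≤ n + s * c := by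
  obtain ⟨ys, h0, hl, hstep, rfl⟩ := h
  choose σ hσS hσ using hstep
  -- the warped chain visits `y, y₁, y₃, …, y_{2n+1}`, moving by `1` first and then by the `σ j`
  let xs : Fin (n + 2) → Y := Fin.cons y fun j => (ys j).2
  let γs : Fin (n + 1) → G := Fin.cons 1 σ
  have hact : ∀ i, act (γs i) (xs i.castSucc) = (ys i).1 := by
    intro i
    induction i using Fin.cases with
    | zero => simp [γs, xs, hact1, h0]
    | succ j => simp [γs, xs, hσ]
  have hwl : ∑ i, (wordLength S (γs i) : ℝ) ≤ n := by
    rw [Fin.sum_univ_succ]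
    simp only [γs, Fin.cons_zero, Fin.cons_succ, wordLength_one, Nat.cast_zero, zero_add]
    calc ∑ j, (wordLength S (σ j) : ℝ) ≤ ∑ _j : Fin n, 1 :=
          Finset.sum_le_sum fun j _ => by exact_mod_cast wordLength_le_one_of_mem (hσS j)
      _ = n := by simp
  refine ⟨_, ⟨n + 1, xs, γs, rfl, by simp [xs, ← Fin.succ_last, hl], rfl⟩, ?_⟩
  simp only [Finset.sum_add_distrib, ← Finset.mul_sum, hact, xs, Fin.cons_succ]
  linarith

theorem warpDist_le_of_isDeltaChainCost (hact1 : ∀ y, act 1 y = y)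
    {s : ℝ} (hs : 0 ≤ s) {n : ℕ} {y y' : Y} {c : ℝ} (h : IsDeltaChainCost S act n y y' c) :
    warpDist S act (fun a b => s * dist a b) y y' ≤ n + s * c :=
  let ⟨_, ha, hle⟩ := exists_mem_chainSums_le_of_isDeltaChainCost hact1 s h
  (csInf_le (chainSums_bddBelow S act (fun _ _ => by positivity) y y') ha).trans hle

theorem warpDist_eq_iInf (hS1 : (1 : G) ∈ S) (hSsymm : ∀ s ∈ S, s⁻¹ ∈ S)
    (hSgen : Subgroup.closure S = ⊤) (hact1 : ∀ y, act 1 y = y)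
    (hactmul : ∀ g h y, act (g * h) y = act g (act h y)) {s : ℝ} (hs : 0 ≤ s) (y y' : Y) :
    warpDist S act (fun a b => s * dist a b) y y' =
      ⨅ n : ℕ, (n + s * deltaCost S act n y y') := by
  refine le_antisymm (le_ciInf fun n => ?_) (le_csInf (chainSums_nonempty ..) ?_)
  · suffices warpDist S act (fun a b => s * dist a b) y y' - n ≤ s * deltaCost S act n y y' by
      linarith
    rw [deltaCost, ← smul_eq_mul, ← Real.sInf_smul_of_nonneg hs]
    refine le_csInf (Set.Nonempty.image (s • ·) (exists_isDeltaChainCost hS1 hact1 n y y')) ?_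
    rintro _ ⟨c, hc, rfl⟩
    linarith [warpDist_le_of_isDeltaChainCost hact1 hs hc, smul_eq_mul s c]
  · rintro _ ⟨N, xs, γs, rfl, rfl, rfl⟩
    obtain ⟨n, c, h, hn, hc⟩ :=
      exists_isDeltaChainCost_le_of_chain hSsymm hSgen hact1 hactmul xs γs
    calc ⨅ n : ℕ, (n + s * deltaCost S act n (xs 0) (xs (Fin.last N)))
        ≤ n + s * deltaCost S act n (xs 0) (xs (Fin.last N)) :=
          ciInf_le (bddBelow_range_add_mul_deltaCost hs _ _) n
      _ ≤ ∑ i, (wordLength S (γs i) : ℝ) +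
            s * ∑ i, dist (act (γs i) (xs i.castSucc)) (xs i.succ) := by
        gcongr
        · exact_mod_cast hn
        · exact (deltaCost_le h).trans hc
      _ = _ := by rw [Finset.sum_add_distrib, Finset.mul_sum]

end WarpedChains

theorem warped_metric_delta_formula_and_concavity_general {Y : Type*} [MetricSpace Y]
    {G : Type*} [Group G] (S : Set G) (hSsymm : ∀ s ∈ S, s⁻¹ ∈ S)
    (hS1 : (1 : G) ∈ S) (hSgen : Subgroup.closure S = ⊤)
    (act : G → Y → Y)
    (hact1 : ∀ y, act 1 y = y) (hactmul : ∀ g h y, act (g * h) y = act g (act h y)) :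
    ∀ y y' : Y,
      (∀ s : ℝ, 1 ≤ s →
        warpDist S act (fun a b => s * dist a b) y y'
          = sInf {c : ℝ | ∃ n : ℕ, c = (n : ℝ) + s * deltaCost S act n y y'}) ∧
      ConcaveOn ℝ (Set.Ici (1 : ℝ))
        (fun s => warpDist S act (fun a b => s * dist a b) y y') := by
  intro y y'
  have hformula : ∀ s : ℝ, 1 ≤ s → warpDist S act (fun a b => s * dist a b) y y' =
      ⨅ n : ℕ, (n + s * deltaCost S act n y y') := fun s hs =>
    warpDist_eq_iInf hS1 hSsymm hSgen hact1 hactmul (by linarith) y y'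
  refine ⟨fun s hs => ?_, ?_⟩
  · rw [hformula s hs, iInf]
    simp only [Set.range, eq_comm]
  refine (concaveOn_ciInf (fun n => ?_) fun s hs => ?_).congr fun s hs => (hformula s hs).symm
  · refine ⟨convex_Ici 1, fun a _ b _ μ ν _ _ hμν => le_of_eq ?_⟩
    simp only [smul_eq_mul]
    linear_combination (n : ℝ) * hμν
  · exact bddBelow_range_add_mul_deltaCost (zero_le_one.trans hs) y y'

/-- `d_s(y,y') = min_n (n + s·δ_n(y,y'))` and `s ↦ d_s(y,y')`
is concave on `[1,∞)`. -/
theorem warped_metric_delta_formula_and_concavity {Y : Type*} [MetricSpace Y] [ProperSpace Y]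
    {G : Type*} [Group G] (S : Set G) (hSfin : S.Finite) (hSsymm : ∀ s ∈ S, s⁻¹ ∈ S)
    (hS1 : (1 : G) ∈ S) (hSgen : Subgroup.closure S = ⊤)
    (act : G → Y → Y)
    (hact1 : ∀ y, act 1 y = y) (hactmul : ∀ g h y, act (g * h) y = act g (act h y))
    (hcont : ∀ g, Continuous (act g)) :
    ∀ y y' : Y,
      (∀ s : ℝ, 1 ≤ s →
        warpDist S act (fun a b => s * dist a b) y y'
          = sInf {c : ℝ | ∃ n : ℕ, c = (n : ℝ) + s * deltaCost S act n y y'}) ∧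
      ConcaveOn ℝ (Set.Ici (1 : ℝ))
        (fun s => warpDist S act (fun a b => s * dist a b) y y') :=
  warped_metric_delta_formula_and_concavity_general S hSsymm hS1 hSgen act hact1 hactmul
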